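/- (Example, Section 5, first part) In the Section-5 setup below, the identity d̄(I − Φ_{0,-1}) + (dΦ_{0,0})(I − Φ_{0,-1}) = 0 holds. Consequently, if g₀ is an m×m matrix over A with d g₀ = 0 and d̄ g₀ = 0 and g := (I − Φ_{0,-1}) g₀ is invertible, then g solves d[(d̄g) g^{-1}] = 0. -/
import Mathlib


/-- A bidifferential calculus: a unital graded associative algebra
`Ω = ⊕_{r≥0} Ω^r` over a field `𝕂`, together with two `𝕂`-linear graded
derivations `d`, `dbar` of degree one satisfying `d² = d̄² = d d̄ + d̄ d = 0`. -/
structure BidiffCalculus (𝕂 : Type) [Field 𝕂] (Ω : Type) [Ring Ω] [Algebra 𝕂 Ω] where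
  grade : ℕ → Submodule 𝕂 Ω
  internal : DirectSum.IsInternal grade
  one_mem : (1 : Ω) ∈ grade 0
  mul_mem : ∀ (r s : ℕ), ∀ a ∈ grade r, ∀ b ∈ grade s, a * b ∈ grade (r + s)
  d : Ω →ₗ[𝕂] Ω
  dbar : Ω →ₗ[𝕂] Ω
  d_grade : ∀ (r : ℕ), ∀ a ∈ grade r, d a ∈ grade (r + 1)
  dbar_grade : ∀ (r : ℕ), ∀ a ∈ grade r, dbar a ∈ grade (r + 1)
  d_leibniz : ∀ (r : ℕ), ∀ a ∈ grade r, ∀ b : Ω,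
      d (a * b) = d a * b + ((-1 : ℤ) ^ r) • (a * d b)
  dbar_leibniz : ∀ (r : ℕ), ∀ a ∈ grade r, ∀ b : Ω,
      dbar (a * b) = dbar a * b + ((-1 : ℤ) ^ r) • (a * dbar b)
  d_d : ∀ a : Ω, d (d a) = 0
  dbar_dbar : ∀ a : Ω, dbar (dbar a) = 0
  d_dbar_anticomm : ∀ a : Ω, d (dbar a) + dbar (d a) = 0

namespace BidiffCalculus

variable {𝕂 : Type} [Field 𝕂] {Ω : Type} [Ring Ω] [Algebra 𝕂 Ω]

/-- Entrywise action of `d` on matrices over `Ω`. -/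
def matD (S : BidiffCalculus 𝕂 Ω) {m n : ℕ} (M : Matrix (Fin m) (Fin n) Ω) :
    Matrix (Fin m) (Fin n) Ω := M.map S.d

/-- Entrywise action of `dbar` on matrices over `Ω`. -/
def matDbar (S : BidiffCalculus 𝕂 Ω) {m n : ℕ} (M : Matrix (Fin m) (Fin n) Ω) :
    Matrix (Fin m) (Fin n) Ω := M.map S.dbar

/-- A matrix has all entries of degree `r`. -/
def MatIn (S : BidiffCalculus 𝕂 Ω) (r : ℕ) {m n : ℕ} (M : Matrix (Fin m) (Fin n) Ω) : Prop :=
  ∀ i j, M i j ∈ S.grade r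

variable (S : BidiffCalculus 𝕂 Ω)

lemma d_one' : S.d 1 = 0 := by
  have h := S.d_leibniz 0 1 S.one_mem 1
  simp only [pow_zero, one_smul, one_mul, mul_one] at h
  have h2 : S.d 1 + 0 = S.d 1 + S.d 1 := by rw [add_zero]; exact h
  exact (add_left_cancel h2).symm

lemma dbar_one' : S.dbar 1 = 0 := by
  have h := S.dbar_leibniz 0 1 S.one_mem 1
  simp only [pow_zero, one_smul, one_mul, mul_one] at h
  have h2 : S.dbar 1 + 0 = S.dbar 1 + S.dbar 1 := by rw [add_zero]; exact h
  exact (add_left_cancel h2).symm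

lemma matD_one' {k : ℕ} : S.matD (1 : Matrix (Fin k) (Fin k) Ω) = 0 := by
  ext i j
  by_cases h : i = j <;>
    simp [matD, Matrix.one_apply, h, d_one']

lemma matDbar_one' {k : ℕ} : S.matDbar (1 : Matrix (Fin k) (Fin k) Ω) = 0 := by
  ext i j
  by_cases h : i = j <;>
    simp [matDbar, Matrix.one_apply, h, dbar_one']

lemma matD_sub' {p q : ℕ} (M N : Matrix (Fin p) (Fin q) Ω) :
    S.matD (M - N) = S.matD M - S.matD N := by
  ext i j; simp [matD, map_sub]

lemma matDbar_sub' {p q : ℕ} (M N : Matrix (Fin p) (Fin q) Ω) :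
    S.matDbar (M - N) = S.matDbar M - S.matDbar N := by
  ext i j; simp [matDbar, map_sub]

lemma matD_neg' {p q : ℕ} (M : Matrix (Fin p) (Fin q) Ω) :
    S.matD (-M) = -S.matD M := by
  ext i j; simp [matD]

lemma matD_matD {p q : ℕ} (M : Matrix (Fin p) (Fin q) Ω) :
    S.matD (S.matD M) = 0 := by
  ext i j; simp [matD, S.d_d]

lemma matD_mul0 {p q r : ℕ} {M : Matrix (Fin p) (Fin q) Ω} (hM : S.MatIn 0 M)
    (N : Matrix (Fin q) (Fin r) Ω) :
    S.matD (M * N) = S.matD M * N + M * S.matD N := by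
  ext i j
  simp only [matD, Matrix.map_apply, Matrix.mul_apply, Matrix.add_apply, map_sum]
  rw [← Finset.sum_add_distrib]
  refine Finset.sum_congr rfl fun k _ => ?_
  have h := S.d_leibniz 0 (M i k) (hM i k) (N k j)
  simpa using h

lemma matDbar_mul0 {p q r : ℕ} {M : Matrix (Fin p) (Fin q) Ω} (hM : S.MatIn 0 M)
    (N : Matrix (Fin q) (Fin r) Ω) :
    S.matDbar (M * N) = S.matDbar M * N + M * S.matDbar N := by
  ext i j
  simp only [matDbar, Matrix.map_apply, Matrix.mul_apply, Matrix.add_apply, map_sum]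
  rw [← Finset.sum_add_distrib]
  refine Finset.sum_congr rfl fun k _ => ?_
  have h := S.dbar_leibniz 0 (M i k) (hM i k) (N k j)
  simpa using h

lemma matIn_one {k : ℕ} : S.MatIn 0 (1 : Matrix (Fin k) (Fin k) Ω) := by
  intro i j
  by_cases h : i = j
  · simpa [Matrix.one_apply, h] using S.one_mem
  · simpa [Matrix.one_apply, h] using Submodule.zero_mem _

lemma matIn_mul0 {p q r : ℕ} {M : Matrix (Fin p) (Fin q) Ω} {N : Matrix (Fin q) (Fin r) Ω}
    (hM : S.MatIn 0 M) (hN : S.MatIn 0 N) : S.MatIn 0 (M * N) := by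
  intro i j
  rw [Matrix.mul_apply]
  refine Submodule.sum_mem _ fun k _ => ?_
  have h := S.mul_mem 0 0 _ (hM i k) _ (hN k j)
  simpa using h

lemma matIn_sub {p q : ℕ} {r : ℕ} {M N : Matrix (Fin p) (Fin q) Ω}
    (hM : S.MatIn r M) (hN : S.MatIn r N) : S.MatIn r (M - N) := by
  intro i j
  simpa [Matrix.sub_apply] using Submodule.sub_mem _ (hM i j) (hN i j)

lemma matDbar_inv {k : ℕ} (U : (Matrix (Fin k) (Fin k) Ω)ˣ) (hU : S.MatIn 0 (Units.val U)) :
    S.matDbar (Units.val U⁻¹)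
      = -(Units.val U⁻¹ * S.matDbar (Units.val U) * Units.val U⁻¹) := by
  have h1 : (Units.val U) * Units.val U⁻¹ = (1 : Matrix (Fin k) (Fin k) Ω) := U.mul_inv
  have h2 : (Units.val U⁻¹) * Units.val U = (1 : Matrix (Fin k) (Fin k) Ω) := U.inv_mul
  have h := S.matDbar_mul0 hU (Units.val U⁻¹)
  rw [h1, matDbar_one'] at h
  have h3 : Units.val U * S.matDbar (Units.val U⁻¹)
      = -(S.matDbar (Units.val U) * Units.val U⁻¹) := by
    rw [eq_neg_iff_add_eq_zero, add_comm]; exact h.symm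
  calc S.matDbar (Units.val U⁻¹)
      = Units.val U⁻¹ * (Units.val U * S.matDbar (Units.val U⁻¹)) := by
        rw [← mul_assoc, h2, one_mul]
    _ = -(Units.val U⁻¹ * S.matDbar (Units.val U) * Units.val U⁻¹) := by
        rw [h3, mul_neg, mul_assoc]

lemma matD_inv {k : ℕ} (U : (Matrix (Fin k) (Fin k) Ω)ˣ) (hU : S.MatIn 0 (Units.val U)) :
    S.matD (Units.val U⁻¹)
      = -(Units.val U⁻¹ * S.matD (Units.val U) * Units.val U⁻¹) := by
  have h1 : (Units.val U) * Units.val U⁻¹ = (1 : Matrix (Fin k) (Fin k) Ω) := U.mul_inv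
  have h2 : (Units.val U⁻¹) * Units.val U = (1 : Matrix (Fin k) (Fin k) Ω) := U.inv_mul
  have h := S.matD_mul0 hU (Units.val U⁻¹)
  rw [h1, matD_one'] at h
  have h3 : Units.val U * S.matD (Units.val U⁻¹)
      = -(S.matD (Units.val U) * Units.val U⁻¹) := by
    rw [eq_neg_iff_add_eq_zero, add_comm]; exact h.symm
  calc S.matD (Units.val U⁻¹)
      = Units.val U⁻¹ * (Units.val U * S.matD (Units.val U⁻¹)) := by
        rw [← mul_assoc, h2, one_mul]
    _ = -(Units.val U⁻¹ * S.matD (Units.val U) * Units.val U⁻¹) := by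
        rw [h3, mul_neg, mul_assoc]

end BidiffCalculus

lemma key_alg {R : Type} [Ring R] {m n : ℕ}
    (θ dθ : Matrix (Fin m) (Fin n) R) (η dη : Matrix (Fin n) (Fin m) R)
    (D G Gi Wv V dW dG lam kap : Matrix (Fin n) (Fin n) R)
    (hWV : Wv * V = 1) (hVW : V * Wv = 1) (hGGi : G * Gi = 1) (hGiG : Gi * G = 1)
    (hSyl : G * Wv - Wv * D = η * θ) :
    -((dθ * D + θ * lam) * (V * (Gi * η)) +
        θ * (-(V * (dW * D - dG * Wv + kap * Wv + Wv * lam + dη * θ) * V) * (Gi * η) +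
          V * (-(Gi * (G * dG + (kap * G - G * kap)) * Gi) * η + Gi * (G * dη + kap * η)))) +
      (dθ * (V * η) + θ * (-(V * dW * V) * η + V * dη)) * (1 - θ * (V * (Gi * η))) = 0 := by
  have hWV' : ∀ (p : ℕ) (X : Matrix (Fin n) (Fin p) R), Wv * (V * X) = X := fun p X => by
    rw [← Matrix.mul_assoc, hWV, Matrix.one_mul]
  have hVW' : ∀ (p : ℕ) (X : Matrix (Fin n) (Fin p) R), V * (Wv * X) = X := fun p X => by
    rw [← Matrix.mul_assoc, hVW, Matrix.one_mul]
  have hGGi' : ∀ (p : ℕ) (X : Matrix (Fin n) (Fin p) R), G * (Gi * X) = X := fun p X => by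
    rw [← Matrix.mul_assoc, hGGi, Matrix.one_mul]
  have hGiG' : ∀ (p : ℕ) (X : Matrix (Fin n) (Fin p) R), Gi * (G * X) = X := fun p X => by
    rw [← Matrix.mul_assoc, hGiG, Matrix.one_mul]
  have hSyl' : ∀ (p : ℕ) (X : Matrix (Fin n) (Fin p) R),
      η * (θ * X) = G * (Wv * X) - Wv * (D * X) := fun p X => by
    rw [← Matrix.mul_assoc, ← Matrix.mul_assoc, ← Matrix.mul_assoc, ← hSyl, Matrix.sub_mul]
  simp only [Matrix.mul_add, Matrix.add_mul, Matrix.mul_sub, Matrix.sub_mul,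
    Matrix.neg_mul, Matrix.mul_neg, neg_neg, Matrix.mul_assoc, Matrix.mul_one,
    Matrix.one_mul, hWV', hVW', hGGi', hGiG', hSyl', hWV, hVW, hGGi, hGiG]
  abel

/-- `Φ_{i,j} = θ Δ^i Ω̂^{-1} Γ^j η`, with negative powers given by powers of inverses. -/
def Phi {R : Type} [Ring R] {m n : ℕ} (θ : Matrix (Fin m) (Fin n) R)
    (η : Matrix (Fin n) (Fin m) R) (Δ Γ W : (Matrix (Fin n) (Fin n) R)ˣ) (i j : ℤ) :
    Matrix (Fin m) (Fin m) R :=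
  θ * Units.val (Δ ^ i) * Units.val W⁻¹ * Units.val (Γ ^ j) * η

open BidiffCalculus in
set_option maxHeartbeats 1000000 in
/-- Example, Section 5, first part:
`d̄(I − Φ_{0,-1}) + (dΦ_{0,0})(I − Φ_{0,-1}) = 0`; consequently, if `g₀` is a
`d`- and `d̄`-constant matrix over `A` and `g := (I − Φ_{0,-1}) g₀` is invertible,
then `g` solves `d[(d̄g) g⁻¹] = 0`. -/
theorem Phi_example_g
    {𝕂 : Type} [Field 𝕂] [CharZero 𝕂] {Ω : Type} [Ring Ω] [Algebra 𝕂 Ω]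
    (S : BidiffCalculus 𝕂 Ω) {m n : ℕ}
    (Δ Γ W : (Matrix (Fin n) (Fin n) Ω)ˣ)
    (lam kap : Matrix (Fin n) (Fin n) Ω)
    (θ : Matrix (Fin m) (Fin n) Ω) (η : Matrix (Fin n) (Fin m) Ω)
    (hΔ : S.MatIn 0 (Units.val Δ)) (hΔinv : S.MatIn 0 (Units.val Δ⁻¹))
    (hΓ : S.MatIn 0 (Units.val Γ)) (hΓinv : S.MatIn 0 (Units.val Γ⁻¹))
    (hW : S.MatIn 0 (Units.val W)) (hWinv : S.MatIn 0 (Units.val W⁻¹))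
    (hlam : S.MatIn 1 lam) (hkap : S.MatIn 1 kap)
    (hθ : S.MatIn 0 θ) (hη : S.MatIn 0 η)
    (heqΔ : S.matDbar (Units.val Δ) + (lam * Units.val Δ - Units.val Δ * lam)
        = S.matD (Units.val Δ) * Units.val Δ)
    (heqlam : S.matDbar lam + lam * lam = S.matD lam * Units.val Δ)
    (heqΓ : S.matDbar (Units.val Γ) - (kap * Units.val Γ - Units.val Γ * kap)
        = Units.val Γ * S.matD (Units.val Γ))
    (heqkap : S.matDbar kap - kap * kap = Units.val Γ * S.matD kap)
    (heqθ : S.matDbar θ = S.matD θ * Units.val Δ + θ * lam)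
    (heqη : S.matDbar η = Units.val Γ * S.matD η + kap * η)
    (hSyl : Units.val Γ * Units.val W - Units.val W * Units.val Δ = η * θ)
    (heqW : S.matDbar (Units.val W) = S.matD (Units.val W) * Units.val Δ
        - S.matD (Units.val Γ) * Units.val W + kap * Units.val W + Units.val W * lam
        + S.matD η * θ) :
    (S.matDbar (1 - Phi θ η Δ Γ W 0 (-1))
        + S.matD (Phi θ η Δ Γ W 0 0) * (1 - Phi θ η Δ Γ W 0 (-1)) = 0)
    ∧ ∀ g₀ : Matrix (Fin m) (Fin m) Ω, S.MatIn 0 g₀ →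
        S.matD g₀ = 0 → S.matDbar g₀ = 0 →
        ∀ g : (Matrix (Fin m) (Fin m) Ω)ˣ,
          Units.val g = (1 - Phi θ η Δ Γ W 0 (-1)) * g₀ →
          S.matD (S.matDbar (Units.val g) * Units.val g⁻¹) = 0 := by
  have hP : Phi θ η Δ Γ W 0 (-1)
      = θ * (Units.val W⁻¹ * (Units.val Γ⁻¹ * η)) := by
    simp only [Phi, zpow_zero, Units.val_one, Matrix.mul_one, zpow_neg, zpow_one]
    rw [Matrix.mul_assoc, Matrix.mul_assoc]
  have hQ : Phi θ η Δ Γ W 0 0 = θ * (Units.val W⁻¹ * η) := by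
    simp only [Phi, zpow_zero, Units.val_one, Matrix.mul_one]
    rw [Matrix.mul_assoc]
  have hdbarΓ : S.matDbar (Units.val Γ)
      = Units.val Γ * S.matD (Units.val Γ) + (kap * Units.val Γ - Units.val Γ * kap) :=
    sub_eq_iff_eq_add.mp heqΓ
  have hdV := S.matD_inv W hW
  have hdbarV := S.matDbar_inv W hW
  have hdbarGi := S.matDbar_inv Γ hΓ
  have hWV : Units.val W * Units.val W⁻¹ = (1 : Matrix (Fin n) (Fin n) Ω) := W.mul_inv
  have hVW : Units.val W⁻¹ * Units.val W = (1 : Matrix (Fin n) (Fin n) Ω) := W.inv_mul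
  have hGGi : Units.val Γ * Units.val Γ⁻¹ = (1 : Matrix (Fin n) (Fin n) Ω) := Γ.mul_inv
  have hGiG : Units.val Γ⁻¹ * Units.val Γ = (1 : Matrix (Fin n) (Fin n) Ω) := Γ.inv_mul
  have hWV' : ∀ (p : ℕ) (X : Matrix (Fin n) (Fin p) Ω),
      Units.val W * (Units.val W⁻¹ * X) = X := fun p X => by
    rw [← Matrix.mul_assoc, hWV, Matrix.one_mul]
  have hVW' : ∀ (p : ℕ) (X : Matrix (Fin n) (Fin p) Ω),
      Units.val W⁻¹ * (Units.val W * X) = X := fun p X => by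
    rw [← Matrix.mul_assoc, hVW, Matrix.one_mul]
  have hGGi' : ∀ (p : ℕ) (X : Matrix (Fin n) (Fin p) Ω),
      Units.val Γ * (Units.val Γ⁻¹ * X) = X := fun p X => by
    rw [← Matrix.mul_assoc, hGGi, Matrix.one_mul]
  have hGiG' : ∀ (p : ℕ) (X : Matrix (Fin n) (Fin p) Ω),
      Units.val Γ⁻¹ * (Units.val Γ * X) = X := fun p X => by
    rw [← Matrix.mul_assoc, hGiG, Matrix.one_mul]
  have hSyl' : ∀ (p : ℕ) (X : Matrix (Fin n) (Fin p) Ω),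
      η * (θ * X) = Units.val Γ * (Units.val W * X) - Units.val W * (Units.val Δ * X) :=
    fun p X => by
      rw [← Matrix.mul_assoc, ← Matrix.mul_assoc, ← Matrix.mul_assoc, ← hSyl, Matrix.sub_mul]
  have key : S.matDbar (1 - Phi θ η Δ Γ W 0 (-1))
      + S.matD (Phi θ η Δ Γ W 0 0) * (1 - Phi θ η Δ Γ W 0 (-1)) = 0 := by
    rw [hP, hQ, matDbar_sub', matDbar_one', zero_sub,
      S.matDbar_mul0 hθ, S.matDbar_mul0 hWinv, S.matDbar_mul0 hΓinv,
      S.matD_mul0 hθ, S.matD_mul0 hWinv,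
      heqθ, heqη, hdbarV, heqW, hdbarGi, hdbarΓ, hdV]
    exact key_alg θ (S.matD θ) η (S.matD η) (Units.val Δ) (Units.val Γ) (Units.val Γ⁻¹)
      (Units.val W) (Units.val W⁻¹) (S.matD (Units.val W)) (S.matD (Units.val Γ)) lam kap
      hWV hVW hGGi hGiG hSyl
  refine ⟨key, ?_⟩
  intro g₀ hg₀ hdg₀ hdbarg₀ g hg
  have hPin : S.MatIn 0 (1 - Phi θ η Δ Γ W 0 (-1)) := by
    rw [hP]
    exact S.matIn_sub S.matIn_one
      (S.matIn_mul0 hθ (S.matIn_mul0 hWinv (S.matIn_mul0 hΓinv hη)))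
  have h2 : S.matDbar (Units.val g)
      = -(S.matD (Phi θ η Δ Γ W 0 0) * Units.val g) := by
    rw [hg, S.matDbar_mul0 hPin, hdbarg₀, mul_zero, add_zero,
      eq_neg_of_add_eq_zero_left key, neg_mul, mul_assoc]
  rw [h2, neg_mul, mul_assoc, Units.mul_inv, mul_one, S.matD_neg', S.matD_matD, neg_zero]
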